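/- arXiv:1712.02776 — 4 statements merged into one kernel-verified Lean document; each statement's English description precedes it below -/
import Mathlib

section
/- For all natural numbers r, p, a, the alternating sum ∑_{i=0}^{p} (-1)^i · C(r, p-i) · C(i, a) equals (-1)^a · C(r-1-a, p-a). -/
/-- Base case `a = 0`: alternating partial sum of binomial coefficients. -/
lemma aux_alt_sum_zero (r : ℕ) (hr : 1 ≤ r) (p : ℕ) :
    ∑ i ∈ Finset.range (p + 1), ((-1 : ℤ) ^ i * (r.choose (p - i) : ℤ))
      = ((r - 1).choose p : ℤ) := by
  obtain ⟨s, rfl⟩ : ∃ s, r = s + 1 := ⟨r - 1, by omega⟩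
  induction p with
  | zero => simp
  | succ p ih =>
      rw [Finset.sum_range_succ']
      have h1 : ∀ i ∈ Finset.range (p + 1),
          ((-1 : ℤ) ^ (i + 1) * ((s + 1).choose (p + 1 - (i + 1)) : ℤ))
            = -((-1 : ℤ) ^ i * ((s + 1).choose (p - i) : ℤ)) := by
        intro i _
        rw [Nat.succ_sub_succ]
        ring
      rw [Finset.sum_congr rfl h1, Finset.sum_neg_distrib, ih]
      simp only [Nat.sub_zero, pow_zero, one_mul, Nat.add_sub_cancel,
        Nat.choose_succ_succ (s) p]
      push_cast
      ring

/-- Summation formula (Lemma on alternating sums of binomial coefficients):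
for natural numbers `r ≥ a + 1` and `p ≥ a`,
`∑_{i=0}^{p} (-1)^i C(r, p-i) C(i, a) = (-1)^a C(r-1-a, p-a)`. -/
theorem alt_sum_choose_choose (r p a : ℕ) (hr : a + 1 ≤ r) (hp : a ≤ p) :
    ∑ i ∈ Finset.range (p + 1),
      ((-1 : ℤ) ^ i * (r.choose (p - i) : ℤ) * (i.choose a : ℤ))
      = (-1 : ℤ) ^ a * ((r - 1 - a).choose (p - a) : ℤ) := by
  induction a generalizing r p with
  | zero =>
      simpa [Nat.choose_zero_right] using aux_alt_sum_zero r hr p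
  | succ a ih =>
      induction p, hp using Nat.le_induction with
      | base =>
          rw [Finset.sum_range_succ]
          have h0 : ∀ i ∈ Finset.range (a + 1),
              ((-1 : ℤ) ^ i * (r.choose (a + 1 - i) : ℤ) * (i.choose (a + 1) : ℤ)) = 0 := by
            intro i hi
            rw [Nat.choose_eq_zero_of_lt (Finset.mem_range.mp hi)]
            simp
          rw [Finset.sum_congr rfl h0]
          simp
      | succ p hp ihp =>
          rw [Finset.sum_range_succ']
          have h1 : ∀ i ∈ Finset.range (p + 1),
              ((-1 : ℤ) ^ (i + 1) * (r.choose (p + 1 - (i + 1)) : ℤ)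
                  * ((i + 1).choose (a + 1) : ℤ))
                = -((-1 : ℤ) ^ i * (r.choose (p - i) : ℤ) * (i.choose a : ℤ))
                  + -((-1 : ℤ) ^ i * (r.choose (p - i) : ℤ) * (i.choose (a + 1) : ℤ)) := by
            intro i _
            rw [Nat.succ_sub_succ, Nat.choose_succ_succ i a]
            push_cast
            ring
          rw [Finset.sum_congr rfl h1, Finset.sum_add_distrib,
            Finset.sum_neg_distrib, Finset.sum_neg_distrib,
            ih r p (by omega) (by omega), ihp]
          obtain ⟨m, rfl⟩ : ∃ m, r = a + 2 + m := ⟨r - (a + 2), by omega⟩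
          obtain ⟨k, rfl⟩ : ∃ k, p = a + 1 + k := ⟨p - (a + 1), by omega⟩
          have e1 : a + 2 + m - 1 - a = m + 1 := by omega
          have e2 : a + 2 + m - 1 - (a + 1) = m := by omega
          have e3 : a + 1 + k - a = k + 1 := by omega
          have e4 : a + 1 + k - (a + 1) = k := by omega
          have e5 : a + 1 + k + 1 - (a + 1) = k + 1 := by omega
          rw [e1, e2, e3, e4, e5, Nat.choose_succ_succ m k]
          simp only [Nat.choose_zero_succ, Nat.cast_zero, mul_zero]
          push_cast
          ring
end

section
/- For all natural numbers r ≥ 2 and p ≥ 1, the sum ∑_{i=0}^{p} (-1)^i · i · C(r, p-i) equals -C(r-2, p-1). -/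
lemma aux_alt_sum_choose (s : ℕ) :
    ∀ p, ∑ i ∈ Finset.range (p + 1), ((-1 : ℤ) ^ i * ((s + 1).choose (p - i) : ℤ))
      = (s.choose p : ℤ) := by
  intro p
  induction p with
  | zero => simp
  | succ p ih =>
    rw [Finset.sum_range_succ']
    have h1 : ∀ i ∈ Finset.range (p + 1),
        ((-1 : ℤ) ^ (i + 1) * ((s + 1).choose (p + 1 - (i + 1)) : ℤ))
          = -((-1 : ℤ) ^ i * ((s + 1).choose (p - i) : ℤ)) := by
      intro i _
      have : p + 1 - (i + 1) = p - i := by omega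
      rw [this]; ring
    rw [Finset.sum_congr rfl h1, Finset.sum_neg_distrib, ih]
    simp only [pow_zero, one_mul, Nat.sub_zero]
    rw [Nat.choose_succ_succ' s p]
    push_cast
    ring

/-- For `r ≥ 2` and `p ≥ 1`, `∑_{i=0}^{p} (-1)^i · i · C(r, p-i) = -C(r-2, p-1)`. -/
theorem alt_sum_mul_choose (r p : ℕ) (hr : 2 ≤ r) (hp : 1 ≤ p) :
    ∑ i ∈ Finset.range (p + 1), ((-1 : ℤ) ^ i * (i : ℤ) * (r.choose (p - i) : ℤ))
      = -((r - 2).choose (p - 1) : ℤ) := by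
  obtain ⟨s, rfl⟩ : ∃ s, r = s + 2 := ⟨r - 2, by omega⟩
  simp only [Nat.add_sub_cancel]
  induction p, hp using Nat.le_induction with
  | base => simp [Finset.sum_range_succ]
  | succ p hp ih =>
    rw [Finset.sum_range_succ']
    push_cast
    simp only [Nat.add_sub_add_right, zero_mul, add_zero]
    have h1 : ∀ i ∈ Finset.range (p + 1),
        ((-1 : ℤ) ^ (i + 1) * ((i : ℤ) + 1) * ((s + 2).choose (p - i) : ℤ))
          = -((-1 : ℤ) ^ i * (i : ℤ) * ((s + 2).choose (p - i) : ℤ))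
            - ((-1 : ℤ) ^ i * ((s + 2).choose (p - i) : ℤ)) := by
      intro i _
      ring
    rw [Finset.sum_congr rfl h1, Finset.sum_sub_distrib, Finset.sum_neg_distrib, ih,
      aux_alt_sum_choose (s + 1) p]
    obtain ⟨q, rfl⟩ : ∃ q, p = q + 1 := ⟨p - 1, by omega⟩
    rw [Nat.choose_succ_succ' s q]
    simp only [Nat.add_sub_cancel]
    push_cast
    ring
end

section
/- In the free module over ℚ with basis {λ, δ}, set κ = 12λ - δ. For integers g ≥ 3 and 0 ≤ p ≤ g - 3, the alternating sum ∑_{i=0}^{p} (-1)^i C(g, p-i) · [ C(2+i, 2)·κ + λ - (2+i)(2(2+i)-1)·((g-1)/g)·λ ] equals C(g-3, p) · [ (8 + 4/g - (g-1)(g-2)/(g(g-p-1)))·λ - δ ]. -/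
open Finset

/-- `∑_{i=0}^p (-1)^i C(n+1, p-i) = C(n, p)`. -/
private lemma alt_sum_choose₀ (m n : ℕ) (hmn : m = n + 1) (p : ℕ) :
    ∑ i ∈ range (p + 1), (-1 : ℚ) ^ i * (m.choose (p - i) : ℚ) = (n.choose p : ℚ) := by
  subst hmn
  induction p with
  | zero => simp
  | succ q ih =>
      rw [Finset.sum_range_succ']
      have h1 : ∀ i ∈ range (q + 1),
          (-1 : ℚ) ^ (i + 1) * ((n+1).choose (q + 1 - (i + 1)) : ℚ)
            = -((-1 : ℚ) ^ i * ((n+1).choose (q - i) : ℚ)) := by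
        intro i _
        rw [Nat.succ_sub_succ]
        ring
      rw [Finset.sum_congr rfl h1, Finset.sum_neg_distrib, ih]
      have hp : (n+1).choose (q+1) = n.choose q + n.choose (q+1) := Nat.choose_succ_succ n q
      simp only [pow_zero, one_mul, Nat.sub_zero, hp]
      push_cast
      ring

/-- `∑_{i=0}^p (-1)^i C(n+2, p-i) i = C(n, p) - C(n+1, p)`. -/
private lemma alt_sum_choose₁ (m n : ℕ) (hmn : m = n + 2) (p : ℕ) :
    ∑ i ∈ range (p + 1), (-1 : ℚ) ^ i * (m.choose (p - i) : ℚ) * (i : ℚ)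
      = (n.choose p : ℚ) - ((n+1).choose p : ℚ) := by
  subst hmn
  induction p with
  | zero => simp
  | succ q ih =>
      rw [Finset.sum_range_succ']
      push_cast
      have h1 : ∀ i ∈ range (q + 1),
          (-1 : ℚ) ^ (i + 1) * ((n+2).choose (q - i) : ℚ) * ((i : ℚ) + 1)
            = -((-1 : ℚ) ^ i * ((n+2).choose (q - i) : ℚ) * (i : ℚ))
              - ((-1 : ℚ) ^ i * ((n+2).choose (q - i) : ℚ)) := by
        intro i _
        ring
      rw [Finset.sum_congr rfl h1, Finset.sum_sub_distrib, Finset.sum_neg_distrib, ih,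
        alt_sum_choose₀ (n+2) (n+1) rfl q]
      have hp1 : (n+1).choose (q+1) = n.choose q + n.choose (q+1) := Nat.choose_succ_succ n q
      simp only [pow_zero, one_mul, Nat.sub_zero, hp1]
      push_cast
      ring

/-- `∑_{i=0}^p (-1)^i C(n+3, p-i) i² = 2C(n, p) - 3C(n+1, p) + C(n+2, p)`. -/
private lemma alt_sum_choose₂ (m n : ℕ) (hmn : m = n + 3) (p : ℕ) :
    ∑ i ∈ range (p + 1), (-1 : ℚ) ^ i * (m.choose (p - i) : ℚ) * (i : ℚ)^2
      = 2 * (n.choose p : ℚ) - 3 * ((n+1).choose p : ℚ) + ((n+2).choose p : ℚ) := by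
  subst hmn
  induction p with
  | zero => norm_num
  | succ q ih =>
      rw [Finset.sum_range_succ']
      push_cast
      have h1 : ∀ i ∈ range (q + 1),
          (-1 : ℚ) ^ (i + 1) * ((n+3).choose (q - i) : ℚ) * ((i : ℚ) + 1)^2
            = -((-1 : ℚ) ^ i * ((n+3).choose (q - i) : ℚ) * (i : ℚ)^2)
              - 2 * ((-1 : ℚ) ^ i * ((n+3).choose (q - i) : ℚ) * (i : ℚ))
              - ((-1 : ℚ) ^ i * ((n+3).choose (q - i) : ℚ)) := by
        intro i _
        ring
      rw [Finset.sum_congr rfl h1, Finset.sum_sub_distrib, Finset.sum_sub_distrib,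
        Finset.sum_neg_distrib, ← Finset.mul_sum, ih,
        alt_sum_choose₁ (n+3) (n+1) rfl q, alt_sum_choose₀ (n+3) (n+2) rfl q]
      have hp1 : (n+1).choose (q+1) = n.choose q + n.choose (q+1) := Nat.choose_succ_succ n q
      have hp2 : (n+2).choose (q+1) = (n+1).choose q + (n+1).choose (q+1) :=
        Nat.choose_succ_succ (n+1) q
      simp only [pow_zero, one_mul, Nat.sub_zero, hp1, hp2]
      push_cast
      ring

/-- Computation of `c₁(S_{p,2})` on `\bar M_g`: in the ℚ-vector space with basis
`{l, d}` (λ and δ), setting `κ = 12λ - δ` and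
`c₁(E_n) = C(n,2)κ + λ - n(2n-1)((g-1)/g)λ`, for `g ≥ 3` and `0 ≤ p ≤ g - 3`,
`∑_{i=0}^{p} (-1)^i C(g, p-i) c₁(E_{2+i})
  = C(g-3, p) ((8 + 4/g - (g-1)(g-2)/(g(g-p-1)))λ - δ)`. -/
theorem c1_Sp2_curves_formula (M : Type*) [AddCommGroup M] [Module ℚ M]
    (l d : M) (hld : LinearIndependent ℚ ![l, d])
    (g p : ℕ) (hg : 3 ≤ g) (hp : p ≤ g - 3) :
    ∑ i ∈ Finset.range (p + 1),
        ((-1 : ℚ) ^ i * (g.choose (p - i) : ℚ)) •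
          (((2 + i : ℕ).choose 2 : ℚ) • ((12 : ℚ) • l - d) + l
            - (((2 + i : ℕ) : ℚ) * (2 * ((2 + i : ℕ) : ℚ) - 1) *
                (((g : ℚ) - 1) / (g : ℚ))) • l)
      = ((g - 3).choose p : ℚ) •
          (((8 : ℚ) + 4 / (g : ℚ)
              - ((g : ℚ) - 1) * ((g : ℚ) - 2) / ((g : ℚ) * ((g : ℚ) - (p : ℚ) - 1))) • l
            - d) := by
  obtain ⟨r, hr⟩ : ∃ r, g = p + r + 3 := ⟨g - 3 - p, by omega⟩
  subst hr
  have h3 : p + r + 3 - 3 = p + r := by omega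
  rw [h3]
  have S2 := alt_sum_choose₂ (p+r+3) (p+r) rfl p
  have S1 := alt_sum_choose₁ (p+r+3) (p+r+1) (by omega) p
  have S0 := alt_sum_choose₀ (p+r+3) (p+r+2) (by omega) p
  -- per-term decomposition into l and d components
  have hterm : ∀ i ∈ range (p + 1),
      ((-1 : ℚ) ^ i * ((p + r + 3).choose (p - i) : ℚ)) •
          (((2 + i : ℕ).choose 2 : ℚ) • ((12 : ℚ) • l - d) + l
            - (((2 + i : ℕ) : ℚ) * (2 * ((2 + i : ℕ) : ℚ) - 1) *
                ((((p + r + 3 : ℕ) : ℚ) - 1) / ((p + r + 3 : ℕ) : ℚ))) • l)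
        = ((-1 : ℚ) ^ i * ((p + r + 3).choose (p - i) : ℚ) *
            (12 * ((2 + i : ℕ).choose 2 : ℚ) + 1
              - ((2 + i : ℕ) : ℚ) * (2 * ((2 + i : ℕ) : ℚ) - 1) *
                  ((((p + r + 3 : ℕ) : ℚ) - 1) / ((p + r + 3 : ℕ) : ℚ)))) • l
          + (-((-1 : ℚ) ^ i * ((p + r + 3).choose (p - i) : ℚ) *
              ((2 + i : ℕ).choose 2 : ℚ))) • d := by
    intro i _
    module
  rw [Finset.sum_congr rfl hterm, Finset.sum_add_distrib, ← Finset.sum_smul, ← Finset.sum_smul]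
  -- the coefficient of `d`
  have hd : ∑ i ∈ range (p + 1),
      (-((-1 : ℚ) ^ i * ((p + r + 3).choose (p - i) : ℚ) * ((2 + i : ℕ).choose 2 : ℚ)))
        = -((p+r).choose p : ℚ) := by
    have hsplit : ∀ i ∈ range (p + 1),
        (-((-1 : ℚ) ^ i * ((p + r + 3).choose (p - i) : ℚ) * ((2 + i : ℕ).choose 2 : ℚ)))
          = (-(1/2)) * ((-1 : ℚ) ^ i * ((p+r+3).choose (p - i) : ℚ) * (i : ℚ)^2)
            + (-(3/2)) * ((-1 : ℚ) ^ i * ((p+r+3).choose (p - i) : ℚ) * (i : ℚ))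
            + (-1) * ((-1 : ℚ) ^ i * ((p+r+3).choose (p - i) : ℚ)) := by
      intro i _
      rw [Nat.cast_choose_two]
      push_cast
      ring
    rw [Finset.sum_congr rfl hsplit, Finset.sum_add_distrib, Finset.sum_add_distrib,
      ← Finset.mul_sum, ← Finset.mul_sum, ← Finset.mul_sum, S2, S1, S0]
    ring
  -- the coefficient of `l`
  have hl : ∑ i ∈ range (p + 1),
      ((-1 : ℚ) ^ i * ((p + r + 3).choose (p - i) : ℚ) *
          (12 * ((2 + i : ℕ).choose 2 : ℚ) + 1
            - ((2 + i : ℕ) : ℚ) * (2 * ((2 + i : ℕ) : ℚ) - 1) *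
                ((((p + r + 3 : ℕ) : ℚ) - 1) / ((p + r + 3 : ℕ) : ℚ))))
      = ((p+r).choose p : ℚ) *
          ((8 : ℚ) + 4 / ((p + r + 3 : ℕ) : ℚ)
            - (((p + r + 3 : ℕ) : ℚ) - 1) * (((p + r + 3 : ℕ) : ℚ) - 2) /
                (((p + r + 3 : ℕ) : ℚ) * (((p + r + 3 : ℕ) : ℚ) - (p : ℚ) - 1))) := by
    have hG : ((p : ℚ) + r + 3) ≠ 0 := by positivity
    have hr1 : ((r : ℚ) + 1) ≠ 0 := by positivity
    have hr2 : ((r : ℚ) + 2) ≠ 0 := by positivity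
    have hsplit : ∀ i ∈ range (p + 1),
        ((-1 : ℚ) ^ i * ((p + r + 3).choose (p - i) : ℚ) *
              (12 * ((2 + i : ℕ).choose 2 : ℚ) + 1
                - ((2 + i : ℕ) : ℚ) * (2 * ((2 + i : ℕ) : ℚ) - 1) *
                    ((((p + r + 3 : ℕ) : ℚ) - 1) / ((p + r + 3 : ℕ) : ℚ))))
          = (6 - 2 * ((((p:ℚ)+r+3) - 1) / ((p:ℚ)+r+3)))
                * ((-1 : ℚ) ^ i * ((p+r+3).choose (p - i) : ℚ) * (i : ℚ)^2)
            + (18 - 7 * ((((p:ℚ)+r+3) - 1) / ((p:ℚ)+r+3)))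
                * ((-1 : ℚ) ^ i * ((p+r+3).choose (p - i) : ℚ) * (i : ℚ))
            + (13 - 6 * ((((p:ℚ)+r+3) - 1) / ((p:ℚ)+r+3)))
                * ((-1 : ℚ) ^ i * ((p+r+3).choose (p - i) : ℚ)) := by
      intro i _
      rw [Nat.cast_choose_two]
      push_cast
      field_simp
      ring
    rw [Finset.sum_congr rfl hsplit, Finset.sum_add_distrib, Finset.sum_add_distrib,
      ← Finset.mul_sum, ← Finset.mul_sum, ← Finset.mul_sum, S2, S1, S0]
    push_cast
    have hA : ((p+r+1).choose p : ℚ) * ((r : ℚ) + 1)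
        = ((p+r).choose p : ℚ) * ((p : ℚ) + r + 1) := by
      have h := Nat.choose_mul_succ_eq (p+r) p
      rw [show p + r + 1 - p = r + 1 from by omega] at h
      exact_mod_cast h.symm
    have hB : ((p+r+2).choose p : ℚ) * ((r : ℚ) + 2)
        = ((p+r+1).choose p : ℚ) * ((p : ℚ) + r + 2) := by
      have h := Nat.choose_mul_succ_eq (p+r+1) p
      rw [show p + r + 1 + 1 - p = r + 2 from by omega] at h
      simp only [show p + r + 1 + 1 = p + r + 2 from by omega] at h
      exact_mod_cast h.symm
    have e1 : ((p+r+1).choose p : ℚ) = ((p+r).choose p : ℚ) * ((p:ℚ)+r+1) / ((r:ℚ)+1) := by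
      rw [eq_div_iff hr1]; exact hA
    have e2 : ((p+r+2).choose p : ℚ)
        = ((p+r).choose p : ℚ) * (((p:ℚ)+r+1) * ((p:ℚ)+r+2)) / (((r:ℚ)+1) * ((r:ℚ)+2)) := by
      rw [eq_div_iff (mul_ne_zero hr1 hr2)]
      linear_combination ((r:ℚ)+1) * hB + ((p:ℚ)+r+2) * hA
    rw [e2, e1]
    have hden : ((p:ℚ) + r + 3) - p - 1 = (r:ℚ) + 2 := by ring
    rw [hden]
    field_simp
    ring
  rw [hl, hd]
  module
end

section
/- In the free module over ℚ with basis {λ, γ}, define for each integer i ≥ 1 the element e_i = (i/12)·κ₁₁ + (i³/6)·κ₃₀ - ((g-1)i²/2 + 1)·λ, where κ₁₁ = 12λ - (4/(g+1))γ and κ₃₀ = 3(g-1)λ + (2/(g+1))γ. Then for integers g ≥ 4 and 0 ≤ p ≤ g - 2, the alternating sum ∑_{i=0}^{p} (-1)^i C(g+1, p-i) · e_{2+i} equals C(g-2, p) · [ (1 - p/(g-2))·κ₃₀ - (g - 1 - (g-1)/(g-p-1))·λ ]. -/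
open Finset

lemma aux_W (k : ℕ) : ∀ m p : ℕ,
    ∑ i ∈ Finset.range (p+1),
      (-1:ℚ)^i * ((m+k+1).choose (p-i) : ℚ) * ((i+k).choose k : ℚ) = (m.choose p : ℚ) := by
  induction k with
  | zero =>
    intro m p
    induction p with
    | zero => simp
    | succ p ih =>
      rw [Finset.sum_range_succ']
      have h1 : ∀ i ∈ Finset.range (p+1),
          (-1:ℚ)^(i+1) * ((m+0+1).choose (p+1-(i+1)) : ℚ) * (((i+1)+0).choose 0 : ℚ)
          = -((-1:ℚ)^i * ((m+0+1).choose (p-i) : ℚ) * ((i+0).choose 0 : ℚ)) := by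
        intro i _
        have h : p + 1 - (i+1) = p - i := by omega
        rw [h]; simp; ring
      rw [Finset.sum_congr rfl h1, Finset.sum_neg_distrib, ih]
      simp [Nat.choose_succ_succ m p]
  | succ k ihk =>
    intro m p
    induction p with
    | zero => simp
    | succ p ih =>
      have h1 : ∀ i ∈ Finset.range (p+2),
          (-1:ℚ)^i * ((m+(k+1)+1).choose (p+1-i) : ℚ) * ((i+(k+1)).choose (k+1) : ℚ)
          = (-1:ℚ)^i * (((m+1)+k+1).choose (p+1-i) : ℚ) * ((i+k).choose k : ℚ)
            + (-1:ℚ)^i * ((m+(k+1)+1).choose (p+1-i) : ℚ) * ((i+k).choose (k+1) : ℚ) := by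
        intro i _
        have h : i + (k+1) = (i+k) + 1 := by omega
        have h2 : m + (k+1) + 1 = (m+1) + k + 1 := by omega
        rw [h, Nat.choose_succ_succ (i+k) k, h2]
        push_cast
        ring
      rw [Finset.sum_congr rfl h1, Finset.sum_add_distrib, ihk (m+1) (p+1)]
      rw [Finset.sum_range_succ']
      have h3 : ∀ i ∈ Finset.range (p+1),
          (-1:ℚ)^(i+1) * ((m+(k+1)+1).choose (p+1-(i+1)) : ℚ) * (((i+1)+k).choose (k+1) : ℚ)
          = -((-1:ℚ)^i * ((m+(k+1)+1).choose (p-i) : ℚ) * ((i+(k+1)).choose (k+1) : ℚ)) := by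
        intro i _
        have h : p + 1 - (i+1) = p - i := by omega
        have h2 : (i+1)+k = i+(k+1) := by omega
        rw [h, h2]; ring
      rw [Finset.sum_congr rfl h3, Finset.sum_neg_distrib, ih]
      have h4 : ((k:ℕ).choose (k+1)) = 0 := Nat.choose_eq_zero_of_lt (by omega)
      simp [h4, Nat.choose_succ_succ m p]

lemma choose_ratio (m p : ℕ) :
    ((m:ℚ)+1) * (m.choose p : ℚ) = (((m:ℚ)+1) - p) * ((m+1).choose p : ℚ) := by
  rcases le_or_gt p (m+1) with hp | hp
  · have h1 := Nat.add_one_mul_choose_eq m p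
    have h2 := Nat.choose_succ_right_eq (m+1) p
    have h3 : (m+1) * m.choose p = (m+1).choose p * (m+1-p) := by
      rw [← h2, ← h1]
    have := congrArg (fun n : ℕ => (n : ℚ)) h3
    push_cast [hp] at this
    linarith [this]
  · rw [Nat.choose_eq_zero_of_lt (by omega), Nat.choose_eq_zero_of_lt (by omega)]
    simp

lemma hc2 (i : ℕ) : ((i+2).choose 2 : ℚ) = ((i:ℚ)+1)*((i:ℚ)+2)/2 := by
  induction i with
  | zero => norm_num
  | succ i ih =>
    have : i + 1 + 2 = (i + 2) + 1 := by omega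
    rw [this, Nat.choose_succ_succ (i+2) 1, Nat.cast_add, ih, Nat.choose_one_right]
    push_cast; ring

lemma hc3 (i : ℕ) : ((i+3).choose 3 : ℚ) = ((i:ℚ)+1)*((i:ℚ)+2)*((i:ℚ)+3)/6 := by
  induction i with
  | zero => norm_num
  | succ i ih =>
    have : i + 1 + 3 = (i + 3) + 1 := by omega
    rw [this, Nat.choose_succ_succ (i+3) 2, Nat.cast_add, ih]
    have : i + 3 = (i+1) + 2 := by omega
    rw [this, hc2 (i+1)]
    push_cast; ring

/-- Computation of `c₁(S_{p,2})` on the moduli space `F_g` of polarized K3 surfaces: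
in the ℚ-vector space with basis `{l, γ}` (λ and γ), with
`κ₁₁ = 12λ - (4/(g+1))γ`, `κ₃₀ = 3(g-1)λ + (2/(g+1))γ`, and
`e_i = (i/12)κ₁₁ + (i³/6)κ₃₀ - ((g-1)i²/2 + 1)λ`, for `g ≥ 4` and `0 ≤ p ≤ g - 2`,
`∑_{i=0}^{p} (-1)^i C(g+1, p-i) e_{2+i}
  = C(g-2, p) ((1 - p/(g-2))κ₃₀ - (g - 1 - (g-1)/(g-p-1))λ)`. -/
theorem c1_Sp2_K3_formula (M : Type*) [AddCommGroup M] [Module ℚ M]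
    (l γ : M) (hlγ : LinearIndependent ℚ ![l, γ])
    (g p : ℕ) (hg : 4 ≤ g) (hp : p ≤ g - 2)
    (κ₁₁ κ₃₀ : M)
    (hκ₁₁ : κ₁₁ = (12 : ℚ) • l - ((4 : ℚ) / ((g : ℚ) + 1)) • γ)
    (hκ₃₀ : κ₃₀ = (3 * ((g : ℚ) - 1)) • l + ((2 : ℚ) / ((g : ℚ) + 1)) • γ)
    (e : ℕ → M)
    (he : ∀ i : ℕ, 1 ≤ i →
      e i = (((i : ℚ)) / 12) • κ₁₁ + (((i : ℚ) ^ 3) / 6) • κ₃₀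
        - ((((g : ℚ) - 1) * (i : ℚ) ^ 2) / 2 + 1) • l) :
    ∑ i ∈ Finset.range (p + 1),
        ((-1 : ℚ) ^ i * ((g + 1).choose (p - i) : ℚ)) • e (2 + i)
      = ((g - 2).choose p : ℚ) •
          (((1 : ℚ) - (p : ℚ) / ((g : ℚ) - 2)) • κ₃₀
            - ((g : ℚ) - 1 - ((g : ℚ) - 1) / ((g : ℚ) - (p : ℚ) - 1)) • l) := by
  have hg4 : (4:ℚ) ≤ (g:ℚ) := by exact_mod_cast hg
  have hpQ : (p:ℚ) ≤ (g:ℚ) - 2 := by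
    have h : (p:ℚ) + 2 ≤ (g:ℚ) := by exact_mod_cast Nat.add_le_of_le_sub (by omega) hp
    linarith
  have hg1 : ((g:ℚ) + 1) ≠ 0 := by positivity
  have hG2 : ((g:ℚ) - 2) ≠ 0 := by intro h; linarith
  have hGp : ((g:ℚ) - (p:ℚ) - 1) ≠ 0 := by
    have : (p:ℚ) ≥ 0 := by positivity
    intro h; linarith
  -- binomial ratio identities
  have cg3 : ((g-3:ℕ):ℚ) = (g:ℚ) - 3 := by
    rw [Nat.cast_sub (by omega)]; norm_num
  have cg2 : ((g-2:ℕ):ℚ) = (g:ℚ) - 2 := by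
    rw [Nat.cast_sub (by omega)]; norm_num
  have I1 : ((g:ℚ) - 2) * ((g-3).choose p : ℚ) = ((g:ℚ) - 2 - p) * ((g-2).choose p : ℚ) := by
    have := choose_ratio (g-3) p
    rw [cg3, show g-3+1 = g-2 by omega] at this
    convert this using 2 <;> ring
  have I2 : ((g:ℚ) - 1) * ((g-2).choose p : ℚ) = ((g:ℚ) - 1 - p) * ((g-1).choose p : ℚ) := by
    have := choose_ratio (g-2) p
    rw [cg2, show g-2+1 = g-1 by omega] at this
    convert this using 2 <;> ring
  have key1 : ((g-2).choose p : ℚ) * (1 - (p:ℚ)/((g:ℚ)-2)) = ((g-3).choose p : ℚ) := by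
    field_simp
    linear_combination -I1
  have key2 : ((g-2).choose p : ℚ) * (((g:ℚ)-1)/((g:ℚ)-(p:ℚ)-1)) = ((g-1).choose p : ℚ) := by
    rw [← mul_div_assoc, div_eq_iff hGp]
    linear_combination I2
  -- sum identities
  have T1 : ∑ i ∈ Finset.range (p+1), (-1:ℚ)^i * ((g+1).choose (p-i) : ℚ) * ((i:ℚ)+1)
      = ((g-1).choose p : ℚ) := by
    have h := aux_W 1 (g-1) p
    rw [show g-1+1+1 = g+1 by omega] at h
    rw [← h]
    refine Finset.sum_congr rfl fun i _ => ?_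
    rw [Nat.choose_one_right]
    push_cast; ring
  have T2 : ∑ i ∈ Finset.range (p+1), (-1:ℚ)^i * ((g+1).choose (p-i) : ℚ) * (((i:ℚ)+1)*((i:ℚ)+2)/2)
      = ((g-2).choose p : ℚ) := by
    have h := aux_W 2 (g-2) p
    rw [show g-2+2+1 = g+1 by omega] at h
    rw [← h]
    refine Finset.sum_congr rfl fun i _ => ?_
    rw [hc2 i]
  have T3 : ∑ i ∈ Finset.range (p+1), (-1:ℚ)^i * ((g+1).choose (p-i) : ℚ) * (((i:ℚ)+1)*((i:ℚ)+2)*((i:ℚ)+3)/6)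
      = ((g-3).choose p : ℚ) := by
    have h := aux_W 3 (g-3) p
    rw [show g-3+3+1 = g+1 by omega] at h
    rw [← h]
    refine Finset.sum_congr rfl fun i _ => ?_
    rw [hc3 i]
  -- decompose each summand
  have hkey : ∀ i ∈ Finset.range (p+1),
      ((-1:ℚ)^i * ((g+1).choose (p-i) : ℚ)) • e (2+i)
      = ((-1:ℚ)^i * ((g+1).choose (p-i) : ℚ) * (((i:ℚ)+1)
          + 3*((g:ℚ)-1)*(((i:ℚ)+1)*((i:ℚ)+2)*((i:ℚ)+3)/6)
          - ((g:ℚ)-1)*(((i:ℚ)+1)*((i:ℚ)+2)/2))) • l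
        + ((-1:ℚ)^i * ((g+1).choose (p-i) : ℚ) * (2/((g:ℚ)+1) * (((i:ℚ)+1)*((i:ℚ)+2)*((i:ℚ)+3)/6))) • γ := by
    intro i _
    rw [he (2+i) (by omega), hκ₁₁, hκ₃₀]
    push_cast
    match_scalars
    · ring
    · ring
  rw [Finset.sum_congr rfl hkey, Finset.sum_add_distrib, ← Finset.sum_smul, ← Finset.sum_smul]
  have hX : ∑ i ∈ Finset.range (p+1), ((-1:ℚ)^i * ((g+1).choose (p-i) : ℚ) * (((i:ℚ)+1)
          + 3*((g:ℚ)-1)*(((i:ℚ)+1)*((i:ℚ)+2)*((i:ℚ)+3)/6)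
          - ((g:ℚ)-1)*(((i:ℚ)+1)*((i:ℚ)+2)/2)))
      = ((g-1).choose p : ℚ) + 3*((g:ℚ)-1)*((g-3).choose p : ℚ) - ((g:ℚ)-1)*((g-2).choose p : ℚ) := by
    have h : ∀ i ∈ Finset.range (p+1), ((-1:ℚ)^i * ((g+1).choose (p-i) : ℚ) * (((i:ℚ)+1)
          + 3*((g:ℚ)-1)*(((i:ℚ)+1)*((i:ℚ)+2)*((i:ℚ)+3)/6)
          - ((g:ℚ)-1)*(((i:ℚ)+1)*((i:ℚ)+2)/2)))
        = (-1:ℚ)^i * ((g+1).choose (p-i) : ℚ) * ((i:ℚ)+1)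
          + 3*((g:ℚ)-1)*((-1:ℚ)^i * ((g+1).choose (p-i) : ℚ) * (((i:ℚ)+1)*((i:ℚ)+2)*((i:ℚ)+3)/6))
          - ((g:ℚ)-1)*((-1:ℚ)^i * ((g+1).choose (p-i) : ℚ) * (((i:ℚ)+1)*((i:ℚ)+2)/2)) := by
      intro i _; ring
    rw [Finset.sum_congr rfl h, Finset.sum_sub_distrib, Finset.sum_add_distrib,
      ← Finset.mul_sum, ← Finset.mul_sum, T1, T2, T3]
  have hY : ∑ i ∈ Finset.range (p+1), ((-1:ℚ)^i * ((g+1).choose (p-i) : ℚ)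
        * (2/((g:ℚ)+1) * (((i:ℚ)+1)*((i:ℚ)+2)*((i:ℚ)+3)/6)))
      = 2/((g:ℚ)+1) * ((g-3).choose p : ℚ) := by
    have h : ∀ i ∈ Finset.range (p+1), ((-1:ℚ)^i * ((g+1).choose (p-i) : ℚ)
        * (2/((g:ℚ)+1) * (((i:ℚ)+1)*((i:ℚ)+2)*((i:ℚ)+3)/6)))
        = 2/((g:ℚ)+1) * ((-1:ℚ)^i * ((g+1).choose (p-i) : ℚ) * (((i:ℚ)+1)*((i:ℚ)+2)*((i:ℚ)+3)/6)) := by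
      intro i _; ring
    rw [Finset.sum_congr rfl h, ← Finset.mul_sum, T3]
  rw [hX, hY, hκ₃₀]
  match_scalars
  · linear_combination (-3*((g:ℚ)-1))*key1 - key2
  · linear_combination (-(2/((g:ℚ)+1)))*key1
end
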